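/- Let M be an ε-differentially private mechanism answering adaptively-chosen threshold queries over [T] with (α, β)-accuracy where α < 1/2. Then there is an ε-differentially private algorithm M' : [T]^n → [T] that makes at most ⌈1 + log₂ T⌉ adaptive threshold queries to M (via binary search) and outputs an α-approximate median of its input with probability at least 1 − β. -/

import Mathlib

open MeasureTheory Finset

/-- The threshold query `c_t(x) = (1/n)|{i : x_i ≤ t}|` on a dataset `x ∈ [T]^n`. -/
noncomputable def thresholdQ {n T : ℕ} (x : Fin n → Fin T) (t : Fin T) : ℝ :=
  ((Finset.univ.filter (fun i => x i ≤ t)).card : ℝ) / n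

/-- `y` is an α-approximate median of `x ∈ [T]^n`. -/
def approxMedian {n T : ℕ} (α : ℝ) (x : Fin n → Fin T) (y : Fin T) : Prop :=
  (1 / 2 - α) * n ≤ ((Finset.univ.filter (fun i => x i ≤ y)).card : ℝ) ∧
  (1 / 2 - α) * n ≤ ((Finset.univ.filter (fun i => y ≤ x i)).card : ℝ)

/-!
Binary search on `[T]` driven by the mechanism's answers: query the midpoint `m` of the current
interval `[lo, hi]`, and move `hi` to `m` if the answer is at least `1/2`, `lo` to `m + 1`
otherwise. While the answers are `α`-accurate, at least `(1/2 - α)n` points lie at or below `hi`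
and at most `(1/2 + α)n` lie below `lo`. The interval halves at every step, so after
`K ≥ log₂ T` queries `hi ≤ lo`, and then `hi` is an `α`-approximate median. Privacy and accuracy
pass to the output because it is a measurable function of the transcript.
-/

noncomputable def aboveHalf (a : ℝ) : Bool := decide ((1 : ℝ) / 2 ≤ a)

theorem measurable_aboveHalf : Measurable aboveHalf :=
  measurable_to_bool <| by
    simpa [aboveHalf, Set.preimage, Set.Ici] using measurableSet_Ici (a := (1 : ℝ) / 2)

def clampFin (T : ℕ) [NeZero T] (m : ℕ) : Fin T :=
  ⟨min m (T - 1), by have := NeZero.pos T; omega⟩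

theorem le_clampFin_iff {T : ℕ} [NeZero T] (y : Fin T) (m : ℕ) :
    y ≤ clampFin T m ↔ (y : ℕ) ≤ m := by
  change (y : ℕ) ≤ min m (T - 1) ↔ _
  have := y.isLt
  omega

theorem clampFin_of_lt {T m : ℕ} [NeZero T] (h : m < T) : clampFin T m = ⟨m, h⟩ := by
  ext
  simp only [clampFin]
  omega

theorem thresholdQ_mul_card {n T : ℕ} (x : Fin n → Fin T) (t : Fin T) :
    thresholdQ x t * n = #{i | x i ≤ t} := by
  rcases n.eq_zero_or_pos with rfl | hn
  · simp
  · exact div_mul_cancel₀ _ (by positivity)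

theorem thresholdQ_clampFin_mul {n T : ℕ} [NeZero T] (x : Fin n → Fin T) (m : ℕ) :
    thresholdQ x (clampFin T m) * n = #{i | (x i : ℕ) ≤ m} := by
  simp only [thresholdQ_mul_card, le_clampFin_iff]

theorem le_two_pow_of_logb_le {T K : ℕ} (h : Real.logb 2 T ≤ K) : T ≤ 2 ^ K := by
  rcases T.eq_zero_or_pos with rfl | hT
  · exact Nat.zero_le _
  · rw [Real.logb_le_iff_le_rpow one_lt_two (by positivity), Real.rpow_natCast] at h
    exact_mod_cast h

namespace BinarySearch

-- A state `(lo, hi)` is the paper's `(ℓ + 1, u)`, so `mid` is its `⌈(ℓ + u) / 2⌉`.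

def mid (s : ℕ × ℕ) : ℕ := (s.1 + s.2) / 2

def step (s : ℕ × ℕ) (b : Bool) : ℕ × ℕ :=
  if s.1 < s.2 then if b then (s.1, mid s) else (mid s + 1, s.2) else s

def run (T : ℕ) (bs : List Bool) : ℕ × ℕ := bs.foldl step (0, T - 1)

variable {T : ℕ}

theorem step_gap (s : ℕ × ℕ) (b : Bool) :
    (step s b).2 - (step s b).1 ≤ (s.2 - s.1) / 2 := by
  unfold step mid
  split_ifs <;> omega

theorem foldl_step_gap (bs : List Bool) (s : ℕ × ℕ) :
    (bs.foldl step s).2 - (bs.foldl step s).1 ≤ (s.2 - s.1) / 2 ^ bs.length := by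
  induction bs generalizing s with
  | nil => simp
  | cons b bs ih =>
    calc _ ≤ ((step s b).2 - (step s b).1) / 2 ^ bs.length := ih (step s b)
      _ ≤ (s.2 - s.1) / 2 / 2 ^ bs.length := Nat.div_le_div_right (step_gap s b)
      _ = (s.2 - s.1) / 2 ^ (b :: bs).length := by
        rw [Nat.div_div_eq_div_mul, List.length_cons, pow_succ']

theorem foldl_step_snd_le (bs : List Bool) (s : ℕ × ℕ) : (bs.foldl step s).2 ≤ s.2 := by
  induction bs generalizing s with
  | nil => exact le_rfl
  | cons b bs ih =>
    refine (ih (step s b)).trans ?_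
    unfold step mid
    split_ifs <;> omega

theorem run_gap (T : ℕ) (bs : List Bool) :
    (run T bs).2 - (run T bs).1 ≤ (T - 1) / 2 ^ bs.length := by
  have := foldl_step_gap bs (0, T - 1)
  rwa [Nat.sub_zero] at this

theorem run_snd_lt [NeZero T] (bs : List Bool) : (run T bs).2 < T :=
  (foldl_step_snd_le bs _).trans_lt (Nat.sub_one_lt (NeZero.ne T))

theorem run_take_succ (T : ℕ) (bs : List Bool) (k : ℕ) (hk : k < bs.length) :
    run T (bs.take (k + 1)) = step (run T (bs.take k)) bs[k] := by
  rw [List.take_add_one, List.getElem?_eq_getElem hk]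
  simp only [run, Option.toList_some, List.foldl_append, List.foldl_cons, List.foldl_nil]

noncomputable def query (T : ℕ) [NeZero T] (as : List ℝ) : Fin T :=
  clampFin T (mid (run T (as.map aboveHalf)))

noncomputable def output (T : ℕ) [NeZero T] (as : List ℝ) : Fin T :=
  clampFin T (run T (as.map aboveHalf)).2

theorem measurable_output_ofFn [NeZero T] (K : ℕ) :
    Measurable fun as : Fin K → ℝ => output T (List.ofFn as) := by
  have : (fun as : Fin K → ℝ => output T (List.ofFn as)) =
      (fun bs : Fin K → Bool => clampFin T (run T (List.ofFn bs)).2) ∘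
        fun as j => aboveHalf (as j) := by
    funext as
    simp [output, List.map_ofFn, Function.comp_def]
  rw [this]
  exact (measurable_of_countable _).comp
    (measurable_pi_lambda _ fun j => measurable_aboveHalf.comp (measurable_pi_apply j))

variable {n : ℕ}

def IsMedianBracket (α : ℝ) (x : Fin n → Fin T) (s : ℕ × ℕ) : Prop :=
  (1 / 2 - α) * n ≤ (#{i | (x i : ℕ) ≤ s.2} : ℝ) ∧
  (#{i | (x i : ℕ) < s.1} : ℝ) ≤ (1 / 2 + α) * n

theorem isMedianBracket_init {α : ℝ} (hα : 0 ≤ α) (x : Fin n → Fin T) :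
    IsMedianBracket α x (0, T - 1) := by
  have hx : ∀ i, (x i : ℕ) ≤ T - 1 := fun i => Nat.le_sub_one_of_lt (x i).isLt
  have hall : #{i | (x i : ℕ) ≤ T - 1} = n := by
    rw [filter_true_of_mem fun i _ => hx i, card_univ, Fintype.card_fin]
  have hnone : #{i | (x i : ℕ) < 0} = 0 := by simp
  have hn : (0 : ℝ) ≤ n := n.cast_nonneg
  constructor
  · rw [hall]
    exact mul_le_of_le_one_left hn (by linarith)
  · rw [hnone, Nat.cast_zero]
    exact mul_nonneg (by linarith) hn

theorem IsMedianBracket.step [NeZero T] {α a : ℝ} {x : Fin n → Fin T} {s : ℕ × ℕ}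
    (hs : IsMedianBracket α x s) (ha : |a - thresholdQ x (clampFin T (mid s))| ≤ α) :
    IsMedianBracket α x (step s (aboveHalf a)) := by
  have hq := thresholdQ_clampFin_mul x (mid s)
  have hn : (0 : ℝ) ≤ n := n.cast_nonneg
  obtain ⟨ha₁, ha₂⟩ := abs_le.mp ha
  unfold BinarySearch.step
  split_ifs with hlt hb
  · refine ⟨?_, hs.2⟩
    have : (1 : ℝ) / 2 ≤ a := by simpa [aboveHalf] using hb
    rw [← hq]
    exact mul_le_mul_of_nonneg_right (by linarith) hn
  · refine ⟨hs.1, ?_⟩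
    have : a < (1 : ℝ) / 2 := by simpa [aboveHalf] using hb
    simp only [Nat.lt_succ_iff]
    rw [← hq]
    exact mul_le_mul_of_nonneg_right (by linarith) hn
  · exact hs

theorem isMedianBracket_run_take [NeZero T] {α : ℝ} (hα : 0 ≤ α) {x : Fin n → Fin T}
    {as : List ℝ}
    (h : ∀ j (hj : j < as.length), |as[j] - thresholdQ x (query T (as.take j))| ≤ α) (k : ℕ) :
    IsMedianBracket α x (run T ((as.map aboveHalf).take k)) := by
  induction k with
  | zero => exact isMedianBracket_init hα x
  | succ k ih =>
    rcases lt_or_ge k as.length with hk | hk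
    · rw [run_take_succ T _ k (by simpa using hk), List.getElem_map]
      refine ih.step ?_
      simpa [query, List.map_take] using h k hk
    · rwa [List.take_of_length_le (by simpa using hk.trans k.le_succ),
        ← List.take_of_length_le (l := as.map aboveHalf) (by simpa using hk)]

theorem approxMedian_of_isMedianBracket {α : ℝ} {x : Fin n → Fin T} {s : ℕ × ℕ}
    (hs : IsMedianBracket α x s) (hle : s.2 ≤ s.1) (hlt : s.2 < T) :
    approxMedian α x ⟨s.2, hlt⟩ := by
  refine ⟨by simpa [Fin.le_def] using hs.1, ?_⟩
  have hsplit : #{i | (x i : ℕ) < s.1} + #{i | s.1 ≤ (x i : ℕ)} = n := by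
    simpa using card_filter_add_card_filter_not (s := univ) fun i => (x i : ℕ) < s.1
  have hmono : #{i | s.1 ≤ (x i : ℕ)} ≤ #{i | (⟨s.2, hlt⟩ : Fin T) ≤ x i} :=
    card_le_card fun i => by simp only [mem_filter, mem_univ, true_and, Fin.le_def]; omega
  have hsplit' : (#{i | (x i : ℕ) < s.1} : ℝ) + #{i | s.1 ≤ (x i : ℕ)} = n := by
    exact_mod_cast hsplit
  have hmono' := (Nat.cast_le (α := ℝ)).mpr hmono
  linarith [hs.2]

theorem approxMedian_output [NeZero T] {α : ℝ} (hα : 0 ≤ α) {x : Fin n → Fin T} {as : List ℝ}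
    (hlen : T ≤ 2 ^ as.length)
    (h : ∀ j (hj : j < as.length), |as[j] - thresholdQ x (query T (as.take j))| ≤ α) :
    approxMedian α x (output T as) := by
  have hs := isMedianBracket_run_take hα h as.length
  rw [List.take_of_length_le (by simp)] at hs
  have hgap := run_gap T (as.map aboveHalf)
  rw [List.length_map, Nat.div_eq_of_lt ((Nat.sub_one_lt (NeZero.ne T)).trans_le hlen)] at hgap
  have hlt := run_snd_lt (T := T) (as.map aboveHalf)
  rw [output, clampFin_of_lt hlt]
  exact approxMedian_of_isMedianBracket hs (by omega) hlt

end BinarySearch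

theorem stmt11_general (T n : ℕ) (hT : 2 ≤ T) (α β ε : ℝ)
    (hα0 : 0 < α) (K : ℕ) (hK : K = Nat.ceil (1 + Real.logb 2 T))
    (M : (List ℝ → Fin T) → (Fin n → Fin T) → Measure (Fin K → ℝ))
    (hprob : ∀ A x, IsProbabilityMeasure (M A x))
    (hdp : ∀ (A : List ℝ → Fin T) (x x' : Fin n → Fin T),
      (∃ i, ∀ j, j ≠ i → x j = x' j) →
      ∀ R : Set (Fin K → ℝ), M A x R ≤ ENNReal.ofReal (Real.exp ε) * M A x' R)
    (hacc : ∀ (A : List ℝ → Fin T) (x : Fin n → Fin T),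
      ENNReal.ofReal (1 - β) ≤ M A x {as : Fin K → ℝ |
        ∀ j : Fin K, |as j - thresholdQ x (A ((List.ofFn as).take j))| ≤ α}) :
    ∃ M' : (Fin n → Fin T) → Measure (Fin T),
      (∀ x, IsProbabilityMeasure (M' x)) ∧
      (∀ x x' : Fin n → Fin T, (∃ i, ∀ j, j ≠ i → x j = x' j) →
        ∀ R : Set (Fin T), M' x R ≤ ENNReal.ofReal (Real.exp ε) * M' x' R) ∧
      (∀ x : Fin n → Fin T,
        ENNReal.ofReal (1 - β) ≤ M' x {y : Fin T | approxMedian α x y}) := by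
  have : NeZero T := ⟨by omega⟩
  have hTK : T ≤ 2 ^ K := le_two_pow_of_logb_le <| by
    rw [hK]
    linarith [Nat.le_ceil (1 + Real.logb 2 T)]
  have hF := BinarySearch.measurable_output_ofFn (T := T) K
  refine ⟨fun x => (M (BinarySearch.query T) x).map fun as => BinarySearch.output T (List.ofFn as),
    fun x => ?_, fun x x' hxx' R => ?_, fun x => ?_⟩
  · have := hprob (BinarySearch.query T) x
    exact Measure.isProbabilityMeasure_map hF.aemeasurable
  · rw [Measure.map_apply hF .of_discrete, Measure.map_apply hF .of_discrete]
    exact hdp _ x x' hxx' _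
  · rw [Measure.map_apply hF .of_discrete]
    refine (hacc _ x).trans (measure_mono fun as has => ?_)
    exact BinarySearch.approxMedian_output hα0.le (by simpa using hTK) fun j hj =>
      by simpa using has ⟨j, by simpa using hj⟩

/-- binary-search reduction: Let `K = ⌈1 + log₂ T⌉`.  Suppose `M` is
an adaptive mechanism for threshold queries over `[T]`: for every adversary
`A : List ℝ → Fin T` (choosing the next threshold from the past answers) and dataset
`x ∈ [T]^n`, `M A x` is a probability distribution over the transcript of `K` answers,
which is ε-differentially private (for every adversary) and `(α,β)`-accurate, i.e. with
probability at least `1 - β` every answer `a_j` is within `α` of `c_{t_j}(x)` where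
`t_j = A(a_1,…,a_{j-1})`.  Then there is an ε-differentially private algorithm
`M' : [T]^n → [T]` that outputs an α-approximate median with probability `≥ 1 - β`. -/
theorem stmt11 (T n : ℕ) (hT : 2 ≤ T) (hn : 1 ≤ n) (α β ε : ℝ)
    (hα0 : 0 < α) (hα : α < 1 / 2) (hβ0 : 0 < β) (hβ1 : β < 1) (hε : 0 < ε)
    (K : ℕ) (hK : K = Nat.ceil (1 + Real.logb 2 T))
    (M : (List ℝ → Fin T) → (Fin n → Fin T) → Measure (Fin K → ℝ))
    (hprob : ∀ A x, IsProbabilityMeasure (M A x))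
    (hdp : ∀ (A : List ℝ → Fin T) (x x' : Fin n → Fin T),
      (∃ i, ∀ j, j ≠ i → x j = x' j) →
      ∀ R : Set (Fin K → ℝ), M A x R ≤ ENNReal.ofReal (Real.exp ε) * M A x' R)
    (hacc : ∀ (A : List ℝ → Fin T) (x : Fin n → Fin T),
      ENNReal.ofReal (1 - β) ≤ M A x {as : Fin K → ℝ |
        ∀ j : Fin K, |as j - thresholdQ x (A ((List.ofFn as).take j))| ≤ α}) :
    ∃ M' : (Fin n → Fin T) → Measure (Fin T),
      (∀ x, IsProbabilityMeasure (M' x)) ∧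
      (∀ x x' : Fin n → Fin T, (∃ i, ∀ j, j ≠ i → x j = x' j) →
        ∀ R : Set (Fin T), M' x R ≤ ENNReal.ofReal (Real.exp ε) * M' x' R) ∧
      (∀ x : Fin n → Fin T,
        ENNReal.ofReal (1 - β) ≤ M' x {y : Fin T | approxMedian α x y}) :=
  stmt11_general T n hT α β ε hα0 K hK M hprob hdp hacc
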